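/- arXiv:2006.03505 — 2 statements merged into one kernel-verified Lean document; each statement's English description precedes it below -/
import Mathlib

section
/- Let (A, E) be an exact category. If the class of admissible morphisms is closed under addition (the sum of two admissible morphisms with the same source and target is admissible), then A is abelian and E is the class of all kernel-cokernel pairs. -/
open CategoryTheory CategoryTheory.Limits

universe v u

variable {C : Type u} [Category.{v} C] [Preadditive C]

/-- `(i, d)` is a kernel-cokernel pair. -/
structure IsKernelCokernelPair {A B X : C} (i : A ⟶ B) (d : B ⟶ X) : Prop where
  w : i ≫ d = 0
  isKernel : Nonempty (IsLimit (KernelFork.ofι i w))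
  isCokernel : Nonempty (IsColimit (CokernelCofork.ofπ d w))

/-- A Quillen exact structure on an additive category. -/
structure ExactStructure (C : Type u) [Category.{v} C] [Preadditive C] :
    Type (max u v) where
  E : ∀ ⦃A B X : C⦄, (A ⟶ B) → (B ⟶ X) → Prop
  pair : ∀ ⦃A B X : C⦄ {i : A ⟶ B} {d : B ⟶ X}, E i d → IsKernelCokernelPair i d
  iso_closed : ∀ ⦃A B X A' B' X' : C⦄ {i : A ⟶ B} {d : B ⟶ X} {i' : A' ⟶ B'} {d' : B' ⟶ X'}
      (eA : A ≅ A') (eB : B ≅ B') (eX : X ≅ X'),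
      E i d → i ≫ eB.hom = eA.hom ≫ i' → d ≫ eX.hom = eB.hom ≫ d' → E i' d'
  admMono_id : ∀ A : C, ∃ (X : C) (d : A ⟶ X), E (𝟙 A) d
  admEpi_id : ∀ A : C, ∃ (X : C) (i : X ⟶ A), E i (𝟙 A)
  admMono_comp : ∀ ⦃A B D : C⦄ (f : A ⟶ B) (g : B ⟶ D),
      (∃ (X : C) (d : B ⟶ X), E f d) → (∃ (X : C) (d : D ⟶ X), E g d) →
      ∃ (X : C) (d : D ⟶ X), E (f ≫ g) d
  admEpi_comp : ∀ ⦃A B D : C⦄ (f : A ⟶ B) (g : B ⟶ D),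
      (∃ (X : C) (i : X ⟶ A), E i f) → (∃ (X : C) (i : X ⟶ B), E i g) →
      ∃ (X : C) (i : X ⟶ A), E i (f ≫ g)
  pushout_admMono : ∀ ⦃A B Z : C⦄ (i : A ⟶ B) (f : A ⟶ Z),
      (∃ (X : C) (d : B ⟶ X), E i d) →
      ∃ (D : C) (g : B ⟶ D) (j : Z ⟶ D) (w : i ≫ g = f ≫ j),
        Nonempty (IsColimit (PushoutCocone.mk g j w)) ∧ ∃ (X : C) (d : D ⟶ X), E j d
  pullback_admEpi : ∀ ⦃B D Z : C⦄ (h : B ⟶ D) (g : Z ⟶ D),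
      (∃ (X : C) (i : X ⟶ B), E i h) →
      ∃ (A : C) (f : A ⟶ B) (k : A ⟶ Z) (w : f ≫ h = k ≫ g),
        Nonempty (IsLimit (PullbackCone.mk f k w)) ∧ ∃ (X : C) (i : X ⟶ A), E i k

namespace ExactStructure

variable (Ex : ExactStructure C)

/-- `i` is an admissible monic. -/
def AdmMono {A B : C} (i : A ⟶ B) : Prop := ∃ (X : C) (d : B ⟶ X), Ex.E i d

/-- `d` is an admissible epic. -/
def AdmEpi {B X : C} (d : B ⟶ X) : Prop := ∃ (A : C) (i : A ⟶ B), Ex.E i d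

/-- `f` is admissible: it factors as an admissible epic followed by an admissible monic. -/
def Admissible {A B : C} (f : A ⟶ B) : Prop :=
  ∃ (Z : C) (e : A ⟶ Z) (m : Z ⟶ B), Ex.AdmEpi e ∧ Ex.AdmMono m ∧ e ≫ m = f

/-- `E` consists of all kernel-cokernel pairs. -/
def IsMaximalAll : Prop :=
  ∀ ⦃A B X : C⦄ (i : A ⟶ B) (d : B ⟶ X), IsKernelCokernelPair i d → Ex.E i d

/-- `S` is `E`-simple. -/
def ESimple (S : C) : Prop :=
  ¬ IsZero S ∧ ∀ ⦃A : C⦄ (i : A ⟶ S), Ex.AdmMono i → IsZero A ∨ IsIso i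

end ExactStructure

/-- `A` is abelian: it has finite products, kernels, cokernels, every mono is normal
and every epi is normal. -/
def IsAbelianCat (C : Type u) [Category.{v} C] [Preadditive C] : Prop :=
  HasFiniteProducts C ∧ HasKernels C ∧ HasCokernels C ∧
  (∀ ⦃X Y : C⦄ (f : X ⟶ Y), Mono f → Nonempty (NormalMono f)) ∧
  (∀ ⦃X Y : C⦄ (f : X ⟶ Y), Epi f → Nonempty (NormalEpi f))

/-- An admissible (`E`-)subobject of `X`. -/
structure ESub (Ex : ExactStructure C) (X : C) where
  obj : C
  ι : obj ⟶ X
  adm : Ex.AdmMono ι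

/-- The order on `E`-subobjects of `X`. -/
def ESubLe (Ex : ExactStructure C) {X : C} (s t : ESub Ex X) : Prop :=
  ∃ h : s.obj ⟶ t.obj, Ex.AdmMono h ∧ h ≫ t.ι = s.ι

/-- Two `E`-subobjects are isomorphic as subobjects. -/
def ESubEquiv (Ex : ExactStructure C) {X : C} (s t : ESub Ex X) : Prop :=
  ESubLe Ex s t ∧ ESubLe Ex t s

/-- The admissible intersection axiom (AI). -/
def AIAxiom (Ex : ExactStructure C) : Prop :=
  ∀ ⦃B Z D : C⦄ (g : B ⟶ D) (j : Z ⟶ D), Ex.AdmMono g → Ex.AdmMono j →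
    ∃ (A : C) (f : A ⟶ B) (f' : A ⟶ Z) (w : f ≫ g = f' ≫ j),
      Ex.AdmMono f ∧ Ex.AdmMono f' ∧ Nonempty (IsLimit (PullbackCone.mk f f' w))

/-- The admissible sum axiom (AS): for every pullback square of admissible monics,
the induced map from the pushout to the common codomain is an admissible monic. -/
def ASAxiom (Ex : ExactStructure C) : Prop :=
  ∀ ⦃A B Z D : C⦄ (f : A ⟶ B) (f' : A ⟶ Z) (g : B ⟶ D) (j : Z ⟶ D) (w : f ≫ g = f' ≫ j),
    Ex.AdmMono f → Ex.AdmMono f' → Ex.AdmMono g → Ex.AdmMono j →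
    IsLimit (PullbackCone.mk f f' w) →
    ∀ ⦃P : C⦄ (l : B ⟶ P) (k : Z ⟶ P) (w' : f ≫ l = f' ≫ k),
      IsColimit (PushoutCocone.mk l k w') →
      ∀ u : P ⟶ D, l ≫ u = g → k ≫ u = j → Ex.AdmMono u

/-- An AIS-category: an AI-category satisfying the admissible sum axiom. -/
def AISCat (Ex : ExactStructure C) : Prop := AIAxiom Ex ∧ ASAxiom Ex

/-- `f` is a kernel of some morphism. -/
def IsKernelMor {A B : C} (f : A ⟶ B) : Prop :=
  ∃ (Z : C) (g : B ⟶ Z) (w : f ≫ g = 0), Nonempty (IsLimit (KernelFork.ofι f w))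

/-- `f` is a cokernel of some morphism. -/
def IsCokernelMor {A B : C} (f : A ⟶ B) : Prop :=
  ∃ (Z : C) (g : Z ⟶ A) (w : g ≫ f = 0), Nonempty (IsColimit (CokernelCofork.ofπ f w))

/-- A quasi-abelian category: pre-abelian, kernels are stable under pushout and
cokernels are stable under pullback. -/
def IsQuasiAbelian (C : Type u) [Category.{v} C] [Preadditive C] : Prop :=
  HasKernels C ∧ HasCokernels C ∧
  (∀ ⦃A B Z : C⦄ (f : A ⟶ B) (t : A ⟶ Z), IsKernelMor f →
    ∀ ⦃P : C⦄ (s : B ⟶ P) (s' : Z ⟶ P) (w : f ≫ s = t ≫ s'),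
      IsColimit (PushoutCocone.mk s s' w) → IsKernelMor s') ∧
  (∀ ⦃A B Z : C⦄ (f : B ⟶ A) (t : Z ⟶ A), IsCokernelMor f →
    ∀ ⦃P : C⦄ (s : P ⟶ B) (s' : P ⟶ Z) (w : s ≫ f = s' ≫ t),
      IsLimit (PullbackCone.mk s s' w) → IsCokernelMor s')

/-- An `E`-composition series of length `n` for `X`. -/
structure CompSeries (Ex : ExactStructure C) (X : C) (n : ℕ) where
  obj : Fin (n + 1) → C
  map : ∀ i : Fin n, obj i.castSucc ⟶ obj i.succ
  zero : IsZero (obj 0)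
  top : obj (Fin.last n) ≅ X
  adm : ∀ i : Fin n, Ex.AdmMono (map i)
  simpleFactor : ∀ i : Fin n,
    ∃ (Q : C) (d : obj i.succ ⟶ Q), Ex.E (map i) d ∧ Ex.ESimple Q

/-- Two composition series are equivalent: there is a bijection of indices matching
isomorphic composition factors. -/
def CompSeries.EquivSeries {Ex : ExactStructure C} {X : C} {n m : ℕ}
    (s : CompSeries Ex X n) (t : CompSeries Ex X m) : Prop :=
  ∃ σ : Fin n ≃ Fin m, ∀ (i : Fin n) ⦃Q Q' : C⦄
    (d : s.obj i.succ ⟶ Q) (d' : t.obj (σ i).succ ⟶ Q'),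
    Ex.E (s.map i) d → Ex.E (t.map (σ i)) d' → Nonempty (Q ≅ Q')

/-- The Jordan-Hölder property for an exact structure. -/
def JordanHolder (Ex : ExactStructure C) : Prop :=
  ∀ (X : C) (n m : ℕ) (s : CompSeries Ex X n) (t : CompSeries Ex X m),
    n = m ∧ s.EquivSeries t

/-- A maximal `E`-subobject: one with `E`-simple cokernel. -/
def ESub.IsMax {Ex : ExactStructure C} {X : C} (A : ESub Ex X) : Prop :=
  ∃ (Q : C) (d : X ⟶ Q), Ex.E A.ι d ∧ Ex.ESimple Q

/-- `Y` belongs to the generalized intersection `Int_X(A, B)`: it is a maximal common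
`E`-subobject of `A` and `B`. -/
def InInt {Ex : ExactStructure C} {X : C} (A B Y : ESub Ex X) : Prop :=
  ESubLe Ex Y A ∧ ESubLe Ex Y B ∧
  ∀ Z : ESub Ex X, ESubLe Ex Z A → ESubLe Ex Z B → ESubLe Ex Y Z → ESubLe Ex Z Y

/-- A diamond exact category. -/
def DiamondCat (Ex : ExactStructure C) : Prop :=
  ∀ (X : C) (A B : ESub Ex X), A.IsMax → B.IsMax → ¬ ESubEquiv Ex A B →
    ∀ Y : ESub Ex X, InInt A B Y →
      (∀ (h : Y.obj ⟶ A.obj), Ex.AdmMono h → h ≫ A.ι = Y.ι →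
        ∀ ⦃Q : C⦄ (d : A.obj ⟶ Q), Ex.E h d → Ex.ESimple Q) ∧
      (∀ (h : Y.obj ⟶ B.obj), Ex.AdmMono h → h ≫ B.ι = Y.ι →
        ∀ ⦃Q : C⦄ (d : B.obj ⟶ Q), Ex.E h d → Ex.ESimple Q) ∧
      (∀ (hA : Y.obj ⟶ A.obj) (hB : Y.obj ⟶ B.obj), Ex.AdmMono hA → Ex.AdmMono hB →
        hA ≫ A.ι = Y.ι → hB ≫ B.ι = Y.ι →
        ∀ ⦃QXA QAY QXB QBY : C⦄
          (dXA : X ⟶ QXA) (dAY : A.obj ⟶ QAY) (dXB : X ⟶ QXB) (dBY : B.obj ⟶ QBY),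
          Ex.E A.ι dXA → Ex.E hA dAY → Ex.E B.ι dXB → Ex.E hB dBY →
          (Nonempty (QXA ≅ QXB) ∧ Nonempty (QAY ≅ QBY)) ∨
          (Nonempty (QXA ≅ QBY) ∧ Nonempty (QAY ≅ QXB)))

/-!
Let `u` be the shear automorphism of `U ⊞ V` with off-diagonal entry `φ : U ⟶ V`. Then
`fst ≫ φ = u ≫ snd - snd` and `φ ≫ inr = inl ≫ u - inl` are differences of admissible
morphisms, hence admissible. Factoring them yields `φ = d ≫ m` with `d` a strong epi and `m` an
admissible monic, and `φ = d' ≫ m'` with `d'` an admissible epic and `m'` a strong mono. These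
give cokernels and kernels, and since a strong epi (mono) that is mono (epi) is an iso, every
mono is an admissible monic and every epi an admissible epic.
-/

instance CategoryTheory.Preadditive.isIso_neg {X Y : C} (f : X ⟶ Y) [IsIso f] : IsIso (-f) :=
  ⟨⟨-inv f, by simp, by simp⟩⟩

namespace ExactStructure

variable {Ex : ExactStructure C}

section Preadditive

variable {A B X : C} {i : A ⟶ B} {d : B ⟶ X}

lemma E.nonempty_normalMono (h : Ex.E i d) : Nonempty (NormalMono i) :=
  ⟨⟨X, d, (Ex.pair h).w, (Ex.pair h).isKernel.some⟩⟩

lemma E.nonempty_normalEpi (h : Ex.E i d) : Nonempty (NormalEpi d) :=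
  ⟨⟨A, i, (Ex.pair h).w, (Ex.pair h).isCokernel.some⟩⟩

lemma AdmMono.strongMono (h : Ex.AdmMono i) : StrongMono i := by
  obtain ⟨_, _, h⟩ := h
  obtain ⟨_⟩ := h.nonempty_normalMono
  infer_instance

lemma AdmEpi.strongEpi (h : Ex.AdmEpi d) : StrongEpi d := by
  obtain ⟨_, _, h⟩ := h
  obtain ⟨_⟩ := h.nonempty_normalEpi
  infer_instance

lemma AdmMono.comp_isIso (h : Ex.AdmMono i) {B' : C} (g : B ⟶ B') [IsIso g] :
    Ex.AdmMono (i ≫ g) := by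
  obtain ⟨X, d, h⟩ := h
  exact ⟨X, inv g ≫ d, Ex.iso_closed (Iso.refl _) (asIso g) (Iso.refl _) h (by simp) (by simp)⟩

lemma AdmMono.isIso_comp (h : Ex.AdmMono i) {A' : C} (g : A' ⟶ A) [IsIso g] :
    Ex.AdmMono (g ≫ i) := by
  obtain ⟨X, d, h⟩ := h
  exact ⟨X, d, Ex.iso_closed (asIso g).symm (Iso.refl _) (Iso.refl _) h (by simp) (by simp)⟩

lemma AdmEpi.isIso_comp (h : Ex.AdmEpi d) {B' : C} (g : B' ⟶ B) [IsIso g] :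
    Ex.AdmEpi (g ≫ d) := by
  obtain ⟨A, i, h⟩ := h
  exact ⟨A, i ≫ inv g,
    Ex.iso_closed (Iso.refl _) (asIso g).symm (Iso.refl _) h (by simp) (by simp)⟩

lemma AdmEpi.comp_isIso (h : Ex.AdmEpi d) {X' : C} (g : X ⟶ X') [IsIso g] :
    Ex.AdmEpi (d ≫ g) := by
  obtain ⟨A, i, h⟩ := h
  exact ⟨A, i, Ex.iso_closed (Iso.refl _) (Iso.refl _) (asIso g) h (by simp) (by simp)⟩

lemma E.of_isColimit (h : Ex.E i d) {X' : C} {d' : B ⟶ X'} {w : i ≫ d' = 0}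
    (hd' : IsColimit (CokernelCofork.ofπ d' w)) : Ex.E i d' := by
  let hd := (Ex.pair h).isCokernel.some
  refine Ex.iso_closed (Iso.refl _) (Iso.refl _) (hd.coconePointUniqueUpToIso hd') h
    (by simp) ?_
  simpa using hd.comp_coconePointUniqueUpToIso_hom hd' WalkingParallelPair.one

lemma AdmEpi.of_isPullback {P Z D B : C} {h : B ⟶ D} (hh : Ex.AdmEpi h) {f : P ⟶ B}
    {k : P ⟶ Z} {g : Z ⟶ D} (sq : IsPullback f k h g) : Ex.AdmEpi k := by
  obtain ⟨_, f', k', _, ⟨hl⟩, hk⟩ := Ex.pullback_admEpi h g hh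
  have sq' : IsPullback f' k' h g := IsPullback.of_isLimit hl
  rw [← sq.isoIsPullback_hom_snd _ _ sq']
  exact AdmEpi.isIso_comp hk _

lemma AdmMono.of_isPushout {A B Z P : C} {i : A ⟶ B} (hi : Ex.AdmMono i) {f : A ⟶ Z}
    {g : B ⟶ P} {j : Z ⟶ P} (sq : IsPushout i f g j) : Ex.AdmMono j := by
  obtain ⟨_, g', j', _, ⟨hc⟩, hj⟩ := Ex.pushout_admMono i f hi
  have sq' : IsPushout i f g' j' := IsPushout.of_isColimit hc
  rw [← sq'.inr_isoIsPushout_hom _ _ sq]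
  exact AdmMono.comp_isIso hj _

lemma AdmEpi.admissible (h : Ex.AdmEpi d) : Ex.Admissible d :=
  ⟨X, d, 𝟙 X, h, Ex.admMono_id X, Category.comp_id d⟩

lemma AdmMono.admissible (h : Ex.AdmMono i) : Ex.Admissible i :=
  ⟨A, 𝟙 A, i, Ex.admEpi_id A, h, Category.id_comp i⟩

lemma Admissible.neg {f : A ⟶ B} (h : Ex.Admissible f) : Ex.Admissible (-f) := by
  obtain ⟨Z, e, m, he, hm, rfl⟩ := h
  exact ⟨Z, e, m ≫ (-𝟙 B), he, hm.comp_isIso _, by simp⟩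

end Preadditive

section ZeroObject

variable [HasZeroObject C]

open ZeroObject

lemma admEpi_zero (U : C) : Ex.AdmEpi (0 : U ⟶ 0) := by
  obtain ⟨X, d, h⟩ := Ex.admMono_id U
  have hd : d = 0 := by simpa using (Ex.pair h).w
  have hd' : Ex.AdmEpi d := ⟨_, _, h⟩
  have := hd'.strongEpi
  have hX : IsZero X := IsZero.of_epi_eq_zero d hd
  simpa [hd] using hd'.comp_isIso hX.isoZero.hom

lemma admMono_zero (U : C) : Ex.AdmMono (0 : 0 ⟶ U) := by
  obtain ⟨W, i, h⟩ := Ex.admEpi_id U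
  have hi : i = 0 := by simpa using (Ex.pair h).w
  have hi' : Ex.AdmMono i := ⟨_, _, h⟩
  have := hi'.strongMono
  have hW : IsZero W := IsZero.of_mono_eq_zero i hi
  simpa [hi] using hi'.isIso_comp hW.isoZero.inv

lemma admEpi_biprod_snd [HasBinaryBiproducts C] (U V : C) :
    Ex.AdmEpi (biprod.snd : U ⊞ V ⟶ V) :=
  (admEpi_zero U).of_isPullback (IsPullback.of_has_biproduct U V)

lemma admMono_biprod_inl [HasBinaryBiproducts C] (U V : C) :
    Ex.AdmMono (biprod.inl : U ⟶ U ⊞ V) :=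
  (admMono_zero V).of_isPushout (IsPushout.of_has_biproduct U V).flip

end ZeroObject

variable (Ex) in
def AdmissibleClosedUnderAdd : Prop :=
  ∀ ⦃X Y : C⦄ (f g : X ⟶ Y), Ex.Admissible f → Ex.Admissible g → Ex.Admissible (f + g)

lemma admissible_sub (hadd : Ex.AdmissibleClosedUnderAdd) {X Y : C} {f g : X ⟶ Y}
    (hf : Ex.Admissible f) (hg : Ex.Admissible g) : Ex.Admissible (f - g) := by
  simpa [sub_eq_add_neg] using hadd f (-g) hf hg.neg

section AdmissibleClosedUnderAdd

variable [HasZeroObject C] [HasBinaryBiproducts C] (hadd : Ex.AdmissibleClosedUnderAdd)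
include hadd

lemma admissible_biprod_fst_comp {U V : C} (φ : U ⟶ V) :
    Ex.Admissible (biprod.fst ≫ φ : U ⊞ V ⟶ V) := by
  have hsnd := admEpi_biprod_snd (Ex := Ex) U V
  convert admissible_sub hadd (hsnd.isIso_comp (Biprod.unipotentUpper φ).hom).admissible
    hsnd.admissible using 1
  simp

lemma admissible_comp_biprod_inr {U V : C} (φ : U ⟶ V) :
    Ex.Admissible (φ ≫ biprod.inr : U ⟶ U ⊞ V) := by
  have hinl := admMono_biprod_inl (Ex := Ex) U V
  convert admissible_sub hadd (hinl.comp_isIso (Biprod.unipotentUpper φ).hom).admissible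
    hinl.admissible using 1
  simp

lemma exists_strongEpi_admMono_fac {U V : C} (φ : U ⟶ V) :
    ∃ (Z : C) (d : U ⟶ Z) (m : Z ⟶ V), StrongEpi d ∧ Ex.AdmMono m ∧ d ≫ m = φ := by
  obtain ⟨Z, e, m, he, hm, hfac⟩ := admissible_biprod_fst_comp hadd φ
  have := hm.strongMono
  have hinr : biprod.inr ≫ e = 0 := by
    rw [← cancel_mono m, Category.assoc, hfac]
    simp
  have he' : biprod.fst ≫ biprod.inl ≫ e = e := by
    ext <;> simp [hinr]
  have : StrongEpi (biprod.fst ≫ biprod.inl ≫ e) := he' ▸ he.strongEpi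
  refine ⟨Z, biprod.inl ≫ e, m, strongEpi_of_strongEpi (biprod.fst : U ⊞ V ⟶ U) _, hm, ?_⟩
  simp [hfac]

lemma exists_admEpi_strongMono_fac {U V : C} (φ : U ⟶ V) :
    ∃ (Z : C) (d : U ⟶ Z) (m : Z ⟶ V), Ex.AdmEpi d ∧ StrongMono m ∧ d ≫ m = φ := by
  obtain ⟨Z, e, m, he, hm, hfac⟩ := admissible_comp_biprod_inr hadd φ
  have := he.strongEpi
  have hfst : m ≫ biprod.fst = 0 := by
    rw [← cancel_epi e, ← Category.assoc, hfac]
    simp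
  have hm' : (m ≫ biprod.snd) ≫ biprod.inr = m := by
    ext <;> simp [hfst]
  have : StrongMono ((m ≫ biprod.snd) ≫ biprod.inr) := hm' ▸ hm.strongMono
  refine ⟨Z, e, m ≫ biprod.snd, he, strongMono_of_strongMono _ (biprod.inr : V ⟶ U ⊞ V), ?_⟩
  simp [reassoc_of% hfac]

lemma admMono_of_mono {U V : C} (f : U ⟶ V) [Mono f] : Ex.AdmMono f := by
  obtain ⟨_, d, m, hd, hm, rfl⟩ := exists_strongEpi_admMono_fac hadd f
  have : Mono d := mono_of_mono d m
  have := isIso_of_mono_of_strongEpi d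
  exact hm.isIso_comp d

lemma admEpi_of_epi {U V : C} (f : U ⟶ V) [Epi f] : Ex.AdmEpi f := by
  obtain ⟨_, d, m, hd, hm, rfl⟩ := exists_admEpi_strongMono_fac hadd f
  have : Epi m := epi_of_epi d m
  have := isIso_of_epi_of_strongMono m
  exact hd.comp_isIso m

lemma hasKernels : HasKernels C where
  has_limit f := by
    obtain ⟨_, _, m, ⟨_, _, hE⟩, hm, rfl⟩ := exists_admEpi_strongMono_fac hadd f
    exact ⟨⟨_, isKernelCompMono (Ex.pair hE).isKernel.some m rfl⟩⟩

lemma hasCokernels : HasCokernels C where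
  has_colimit f := by
    obtain ⟨_, d, _, hd, ⟨_, _, hE⟩, rfl⟩ := exists_strongEpi_admMono_fac hadd f
    exact ⟨⟨_, isCokernelEpiComp (Ex.pair hE).isCokernel.some d rfl⟩⟩

lemma isMaximalAll : Ex.IsMaximalAll := by
  intro A B X i d hid
  have : Mono i := by simpa using mono_of_isLimit_fork hid.isKernel.some
  obtain ⟨_, _, hE⟩ := admMono_of_mono hadd i
  exact hE.of_isColimit hid.isCokernel.some

end AdmissibleClosedUnderAdd

end ExactStructure

/-- If admissible morphisms are closed under addition, then the category is abelian and
the exact structure is the class of all kernel-cokernel pairs. -/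
theorem stmt2 [HasZeroObject C] [HasBinaryBiproducts C] (Ex : ExactStructure C)
    (h : ∀ ⦃X Y : C⦄ (f g : X ⟶ Y),
      Ex.Admissible f → Ex.Admissible g → Ex.Admissible (f + g)) :
    IsAbelianCat C ∧ Ex.IsMaximalAll := by
  refine ⟨⟨hasFiniteProducts_of_has_binary_and_terminal, ExactStructure.hasKernels h,
    ExactStructure.hasCokernels h, fun _ _ f _ => ?_, fun _ _ f _ => ?_⟩,
    ExactStructure.isMaximalAll h⟩
  · obtain ⟨_, _, hE⟩ := ExactStructure.admMono_of_mono h f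
    exact hE.nonempty_normalMono
  · obtain ⟨_, _, hE⟩ := ExactStructure.admEpi_of_epi h f
    exact hE.nonempty_normalEpi
end

section
/- Let (A, E) be an exact category satisfying the admissible intersection axiom (AI): the pullback of any two admissible monics exists and consists of admissible monics. Then E contains every kernel-cokernel pair of A, i.e. E = E_all. -/
open CategoryTheory CategoryTheory.Limits

universe v u

variable {C : Type u} [Category.{v} C] [Preadditive C]

/-
Inside `B ⊕ X`, the graph `inl + h ≫ inr` of `h : B ⟶ X` meets the summand `inl` exactly in the
kernel `f` of `h`: their pullback is `(f, f)`. The graph is the image of `inl` under the shear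
automorphism `1 + fst ≫ h ≫ inr`, so both are admissible monics and (AI) makes `f` an admissible
monic. As `h` is a cokernel of `f`, the pair `(f, h)` is then a conflation.
-/

namespace CategoryTheory.Limits.BinaryBicone

variable {B X : C} (b : BinaryBicone B X) (h : B ⟶ X)

def shearIso : b.pt ≅ b.pt where
  hom := 𝟙 _ + b.fst ≫ h ≫ b.inr
  inv := 𝟙 _ - b.fst ≫ h ≫ b.inr
  hom_inv_id := by simp [Preadditive.add_comp, Preadditive.comp_sub]
  inv_hom_id := by simp [Preadditive.sub_comp, Preadditive.comp_add]

lemma inl_shearIso_hom : b.inl ≫ (b.shearIso h).hom = b.inl + h ≫ b.inr := by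
  simp [shearIso, Preadditive.comp_add]

lemma comp_graph_eq_comp_inl {A : C} {f : A ⟶ B} (w : f ≫ h = 0) :
    f ≫ (b.inl + h ≫ b.inr) = f ≫ b.inl := by
  simp [Preadditive.comp_add, reassoc_of% w]

def isLimitPullbackConeGraphInl {A : C} {f : A ⟶ B} {w : f ≫ h = 0}
    (hf : IsLimit (KernelFork.ofι f w)) :
    IsLimit (PullbackCone.mk f f (b.comp_graph_eq_comp_inl h w)) := by
  have fst_eq_snd (s : PullbackCone (b.inl + h ≫ b.inr) b.inl) : s.fst = s.snd := by
    simpa [Preadditive.add_comp] using s.condition =≫ b.fst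
  have fst_comp (s : PullbackCone (b.inl + h ≫ b.inr) b.inl) : s.fst ≫ h = 0 := by
    simpa [Preadditive.add_comp] using s.condition =≫ b.snd
  have : Mono f := by simpa using mono_of_isLimit_fork hf
  let lift (s : PullbackCone (b.inl + h ≫ b.inr) b.inl) :=
    KernelFork.IsLimit.lift' hf s.fst (fst_comp s)
  refine PullbackCone.IsLimit.mk _ (fun s => (lift s).1) (fun s => (lift s).2)
    (fun s => (lift s).2.trans (fst_eq_snd s)) (fun s m hm _ => ?_)
  rw [← cancel_mono f, hm]
  exact (lift s).2.symm

end CategoryTheory.Limits.BinaryBicone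

namespace ExactStructure

variable (Ex : ExactStructure C)

lemma mono_of_admMono {A B : C} {i : A ⟶ B} (hi : Ex.AdmMono i) : Mono i := by
  obtain ⟨_, _, hE⟩ := hi
  simpa using mono_of_isLimit_fork (Ex.pair hE).isKernel.some

lemma admMono_of_isIso {A B : C} (e : A ⟶ B) [IsIso e] : Ex.AdmMono e := by
  obtain ⟨Q, d, hE⟩ := Ex.admMono_id A
  exact ⟨Q, inv e ≫ d, Ex.iso_closed (Iso.refl A) (asIso e) (Iso.refl Q) hE (by simp) (by simp)⟩

lemma exists_isZero_admMono (X : C) : ∃ (Z : C) (i : Z ⟶ X), IsZero Z ∧ Ex.AdmMono i := by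
  obtain ⟨Z, i, hE⟩ := Ex.admEpi_id X
  have hi : i = 0 := by simpa using (Ex.pair hE).w
  have : Mono i := Ex.mono_of_admMono ⟨X, 𝟙 X, hE⟩
  refine ⟨Z, i, ?_, X, 𝟙 X, hE⟩
  rw [IsZero.iff_id_eq_zero, ← cancel_mono i, hi]
  simp

lemma exists_binaryBicone_admMono_inl (B X : C) :
    ∃ b : BinaryBicone B X, Ex.AdmMono b.inl := by
  obtain ⟨Z, i, hZ, hi⟩ := Ex.exists_isZero_admMono X
  obtain ⟨D, inr, inl, w, ⟨hD⟩, hinl⟩ := Ex.pushout_admMono i (0 : Z ⟶ B) hi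
  let desc {T : C} (x : X ⟶ T) (y : B ⟶ T) : D ⟶ T :=
    PushoutCocone.IsColimit.desc hD x y (hZ.eq_of_src _ _)
  exact ⟨{ pt := D, fst := desc 0 (𝟙 B), snd := desc (𝟙 X) 0, inl := inl, inr := inr
           inl_fst := PushoutCocone.IsColimit.inr_desc hD _ _ _
           inl_snd := PushoutCocone.IsColimit.inr_desc hD _ _ _
           inr_fst := PushoutCocone.IsColimit.inl_desc hD _ _ _
           inr_snd := PushoutCocone.IsColimit.inl_desc hD _ _ _ }, hinl⟩

lemma admMono_fst_of_isLimit {B Z D : C} {g : B ⟶ D} {j : Z ⟶ D} {s t : PullbackCone g j}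
    (hs : IsLimit s) (ht : IsLimit t) (h : Ex.AdmMono s.fst) : Ex.AdmMono t.fst := by
  have hfac : (ht.conePointUniqueUpToIso hs).hom ≫ s.fst = t.fst :=
    ht.conePointUniqueUpToIso_hom_comp hs WalkingCospan.left
  rw [← hfac]
  exact Ex.admMono_comp _ _ (Ex.admMono_of_isIso _) h

lemma E_of_admMono {A B X : C} {f : A ⟶ B} {h : B ⟶ X} (hf : Ex.AdmMono f)
    (hfh : IsKernelCokernelPair f h) : Ex.E f h := by
  obtain ⟨Q, d, hE⟩ := hf
  obtain ⟨hd⟩ := (Ex.pair hE).isCokernel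
  obtain ⟨hh⟩ := hfh.isCokernel
  refine Ex.iso_closed (Iso.refl A) (Iso.refl B) (hd.coconePointUniqueUpToIso hh) hE (by simp) ?_
  simpa using hd.comp_coconePointUniqueUpToIso_hom hh WalkingParallelPair.one

end ExactStructure

theorem stmt7_general (Ex : ExactStructure C) (hAI : AIAxiom Ex) : Ex.IsMaximalAll := by
  intro A B X f h hfh
  obtain ⟨b, hinl⟩ := Ex.exists_binaryBicone_admMono_inl B X
  have hgraph : Ex.AdmMono (b.inl + h ≫ b.inr) := by
    rw [← b.inl_shearIso_hom h]
    exact Ex.admMono_comp _ _ hinl (Ex.admMono_of_isIso _)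
  obtain ⟨P, u, v, w, hu, -, ⟨hP⟩⟩ := hAI _ _ hgraph hinl
  have hf : Ex.AdmMono f := Ex.admMono_fst_of_isLimit (s := PullbackCone.mk u v w) hP
    (b.isLimitPullbackConeGraphInl h hfh.isKernel.some) hu
  exact Ex.E_of_admMono hf hfh

/-- An exact category on a pre-abelian category satisfying the admissible intersection
axiom (AI) contains every kernel-cokernel pair, i.e. `E = E_all`. -/
theorem stmt7 [HasKernels C] [HasCokernels C] (Ex : ExactStructure C)
    (hAI : AIAxiom Ex) : Ex.IsMaximalAll :=
  stmt7_general Ex hAI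
end
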